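/- arXiv:2208.05780 — 3 statements merged into one kernel-verified Lean document; each statement's English description precedes it below -/
import Mathlib

section
/- Let X be a topological space and (f_j) a sequence of functionals from X to the extended reals that is equi-mildly coercive and Γ-converges to f_∞. Then f_∞ attains its minimum on X and min_X f_∞ = lim_{j→∞} inf_X f_j. -/
open Filter Topology

/-- The Γ-lower limit, defined via open neighborhoods. -/
noncomputable def GammaLiminf {X : Type*} [TopologicalSpace X]
    (f : ℕ → X → EReal) (x : X) : EReal :=
  ⨆ (U : Set X) (_ : IsOpen U) (_ : x ∈ U),
    atTop.liminf (fun j => ⨅ y ∈ U, f j y)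

/-- The Γ-upper limit, defined via open neighborhoods. -/
noncomputable def GammaLimsup {X : Type*} [TopologicalSpace X]
    (f : ℕ → X → EReal) (x : X) : EReal :=
  ⨆ (U : Set X) (_ : IsOpen U) (_ : x ∈ U),
    atTop.limsup (fun j => ⨅ y ∈ U, f j y)

/-- If `(fj)` is equi-mildly coercive and Γ-converges to `finf`,
then `finf` attains its minimum on `X` and the minimum value is the limit of the
infima of the `fj`. -/
theorem fundamental_theorem_gamma_convergence
    {X : Type*} [TopologicalSpace X]
    (fj : ℕ → X → EReal) (finf : X → EReal)
    (hcoercive : ∃ K : Set X, K.Nonempty ∧ IsCompact K ∧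
      ∀ j, (⨅ x : X, fj j x) = ⨅ x ∈ K, fj j x)
    (hGamma : ∀ x, GammaLiminf fj x = finf x ∧ GammaLimsup fj x = finf x) :
    ∃ x₀ : X, (∀ x : X, finf x₀ ≤ finf x) ∧
      Tendsto (fun j => ⨅ x : X, fj j x) atTop (𝓝 (finf x₀)) := by
  obtain ⟨K, hKne, hKcomp, hKinf⟩ := hcoercive
  set m : ℕ → EReal := fun j => ⨅ x : X, fj j x with hm
  set L : EReal := atTop.liminf m with hL
  have step1 : ∀ x : X, atTop.limsup m ≤ finf x := by
    intro x
    rw [← (hGamma x).2]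
    have h1 : atTop.limsup (fun j => ⨅ y ∈ (Set.univ : Set X), fj j y)
        ≤ GammaLimsup fj x := by
      unfold GammaLimsup
      exact le_iSup_of_le (Set.univ : Set X)
        (le_iSup_of_le isOpen_univ (le_iSup_of_le (Set.mem_univ x) le_rfl))
    simpa [iInf_univ] using h1
  have step2 : ∃ x₀ ∈ K, finf x₀ ≤ L := by
    by_contra h
    push_neg at h
    have hU : ∀ x : K, ∃ U : Set X, IsOpen U ∧ (x : X) ∈ U ∧
        L < atTop.liminf (fun j => ⨅ y ∈ U, fj j y) := by
      intro x
      have hx := h x x.2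
      rw [← (hGamma x).1] at hx
      unfold GammaLiminf at hx
      rw [lt_iSup_iff] at hx
      obtain ⟨U, hU1⟩ := hx
      rw [lt_iSup_iff] at hU1
      obtain ⟨hUo, hU2⟩ := hU1
      rw [lt_iSup_iff] at hU2
      obtain ⟨hxU, hU3⟩ := hU2
      exact ⟨U, hUo, hxU, hU3⟩
    choose U hUo hxU hUlim using hU
    have hcover : K ⊆ ⋃ x : K, U x := fun y hy =>
      Set.mem_iUnion.mpr ⟨⟨y, hy⟩, hxU ⟨y, hy⟩⟩
    obtain ⟨t, ht⟩ := hKcomp.elim_finite_subcover U hUo hcover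
    have htne : t.Nonempty := by
      obtain ⟨y, hy⟩ := hKne
      obtain ⟨i, hit, _⟩ := Set.mem_iUnion₂.mp (ht hy)
      exact ⟨i, hit⟩
    obtain ⟨i₀, hi₀t, hi₀min⟩ := t.exists_min_image
      (fun i => atTop.liminf (fun j => ⨅ y ∈ U i, fj j y)) htne
    obtain ⟨a, haL, hab⟩ := exists_between (hUlim i₀)
    have ha : ∀ i ∈ t, a < atTop.liminf (fun j => ⨅ y ∈ U i, fj j y) :=
      fun i hi => lt_of_lt_of_le hab (hi₀min i hi)
    have hev : ∀ᶠ j in atTop, ∀ i ∈ t, a < ⨅ y ∈ U i, fj j y := by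
      rw [Filter.eventually_all_finset]
      exact fun i hi => Filter.eventually_lt_of_lt_liminf (ha i hi)
    have hevm : ∀ᶠ j in atTop, a ≤ m j := by
      filter_upwards [hev] with j hj
      show a ≤ ⨅ x : X, fj j x
      rw [hKinf j]
      refine le_iInf₂ fun y hy => ?_
      obtain ⟨i, hit, hyU⟩ := Set.mem_iUnion₂.mp (ht hy)
      exact le_trans (le_of_lt (hj i hit)) (iInf₂_le y hyU)
    have hfin : a ≤ L := Filter.le_liminf_of_le (h := hevm)
    exact absurd hfin (not_le.mpr haL)
  obtain ⟨x₀, hx₀K, hx₀⟩ := step2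
  have hLls : L ≤ atTop.limsup m := Filter.liminf_le_limsup
  have heq1 : atTop.limsup m = finf x₀ :=
    le_antisymm (step1 x₀) (le_trans hx₀ hLls)
  have heq2 : atTop.liminf m = finf x₀ :=
    le_antisymm (le_trans hLls (step1 x₀)) hx₀
  exact ⟨x₀, fun x => le_trans hx₀ (le_trans hLls (step1 x)),
    tendsto_of_liminf_eq_limsup heq2 heq1⟩
end

section
/- Let X be a metric space and (f_j) a sequence of functionals from X to ℝ∪{+∞} that Γ-converges to f_∞ and is equi-mildly coercive. Let ε_j → 0 with ε_j > 0, and let x_j be an ε_j-minimizer of f_j for each j. Then any cluster point x_∞ of (x_j) is a minimizer of f_∞, and f_∞(x_∞) = lim_j f_j(x_j). -/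
open Filter Topology

/-!
Recovery sequences and ε-minimality give `limsup_j f_j(x_j) ≤ f_∞(y)` for every `y`, while
the liminf inequality along the subsequence converging to `x_∞` gives
`f_∞(x_∞) ≤ limsup_j f_j(x_j)`; hence `x_∞` minimizes `f_∞`. Conversely, equi-mild
coercivity lets one pick almost-minimizers of `f_j` in a fixed compact set, and the
liminf inequality at a cluster point of those yields
`inf f_∞ ≤ liminf_j inf f_j ≤ liminf_j f_j(x_j)`.
-/

section GammaLiminf

variable {X β : Type*} [TopologicalSpace X] [CompleteLinearOrder β] {F : ℕ → X → β}

theorem tendsto_extend_of_strictMono {σ : ℕ → ℕ} (hσ : StrictMono σ) {v : ℕ → X}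
    {y : X} (hv : Tendsto v atTop (𝓝 y)) :
    Tendsto (Function.extend σ v fun _ ↦ y) atTop (𝓝 y) := by
  refine fun s hs ↦ mem_map.mpr ?_
  obtain ⟨N, hN⟩ := eventually_atTop.mp (hv.eventually_mem hs)
  filter_upwards [eventually_ge_atTop (σ N)] with j hj
  by_cases hj' : ∃ k, σ k = j
  · obtain ⟨k, rfl⟩ := hj'
    rw [Set.mem_preimage, hσ.injective.extend_apply]
    exact hN k (hσ.le_iff_le.mp hj)
  · rw [Set.mem_preimage, Function.extend_apply' _ _ _ hj']
    exact mem_of_mem_nhds hs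

theorem le_liminf_comp_of_forall_tendsto {c : β} {y : X}
    (H : ∀ u : ℕ → X, Tendsto u atTop (𝓝 y) → c ≤ liminf (fun j ↦ F j (u j)) atTop)
    {σ : ℕ → ℕ} (hσ : StrictMono σ) {v : ℕ → X} (hv : Tendsto v atTop (𝓝 y)) :
    c ≤ liminf (fun k ↦ F (σ k) (v k)) atTop := by
  set u := Function.extend σ v fun _ ↦ y
  calc c ≤ liminf (fun j ↦ F j (u j)) atTop := H u (tendsto_extend_of_strictMono hσ hv)
    _ ≤ liminf ((fun j ↦ F j (u j)) ∘ σ) atTop := hσ.tendsto_atTop.liminf_le_liminf_comp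
    _ = liminf (fun k ↦ F (σ k) (v k)) atTop := by
      simp only [Function.comp_def, u, hσ.injective.extend_apply]

theorem le_limsup_of_tendsto_comp {c : β} {y : X}
    (H : ∀ u : ℕ → X, Tendsto u atTop (𝓝 y) → c ≤ liminf (fun j ↦ F j (u j)) atTop)
    {σ : ℕ → ℕ} (hσ : StrictMono σ) {x : ℕ → X}
    (hx : Tendsto (x ∘ σ) atTop (𝓝 y)) :
    c ≤ limsup (fun j ↦ F j (x j)) atTop :=
  calc c ≤ liminf (fun k ↦ F (σ k) (x (σ k))) atTop :=
        le_liminf_comp_of_forall_tendsto H hσ hx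
    _ ≤ limsup (fun k ↦ F (σ k) (x (σ k))) atTop := liminf_le_limsup
    _ ≤ limsup (fun j ↦ F j (x j)) atTop :=
        hσ.tendsto_atTop.limsup_comp_le_limsup (u := fun j ↦ F j (x j))

theorem iInf_le_liminf_iInf_of_isSeqCompact [DenselyOrdered β] {f : X → β}
    (H : ∀ y (u : ℕ → X), Tendsto u atTop (𝓝 y) →
      f y ≤ liminf (fun j ↦ F j (u j)) atTop)
    {K : Set X} (hK : IsSeqCompact K) (hKinf : ∀ j, ⨅ x, F j x = ⨅ x ∈ K, F j x) :
    ⨅ x, f x ≤ liminf (fun j ↦ ⨅ x, F j x) atTop := by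
  refine le_of_forall_gt_imp_ge_of_dense fun c hc ↦ ?_
  obtain ⟨ψ, hψ, hψc⟩ :=
    extraction_of_frequently_atTop (frequently_lt_of_liminf_lt (by isBoundedDefault) hc)
  have hmem : ∀ k, ∃ y ∈ K, F (ψ k) y < c := fun k ↦ by
    simpa only [hKinf, iInf_lt_iff, exists_prop] using hψc k
  choose y hyK hyc using hmem
  obtain ⟨z, -, ρ, hρ, hyz⟩ := hK hyK
  calc ⨅ x, f x ≤ f z := iInf_le f z
    _ ≤ liminf (fun k ↦ F (ψ (ρ k)) (y (ρ k))) atTop :=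
      le_liminf_comp_of_forall_tendsto (H z) (hψ.comp hρ) hyz
    _ ≤ liminf (fun _ ↦ c) atTop := liminf_le_liminf (.of_forall fun k ↦ (hyc (ρ k)).le)
    _ = c := liminf_const c

end GammaLiminf

section EpsMinimizer

variable {ι : Type*} {l : Filter ι} {ε : ι → ℝ}

theorem tendsto_coe_neg_inv_nhds_bot (hε : ∀ i, 0 < ε i) (hε0 : Tendsto ε l (𝓝 0)) :
    Tendsto (fun i ↦ ((-(ε i)⁻¹ : ℝ) : EReal)) l (𝓝 ⊥) :=
  EReal.tendsto_coe_atBot.comp <| tendsto_neg_atTop_atBot.comp <|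
    tendsto_inv_nhdsGT_zero.comp (tendsto_nhdsWithin_iff.mpr ⟨hε0, .of_forall hε⟩)

theorem limsup_le_of_le_max_add_neg_inv [l.NeBot] {a b : ι → EReal}
    (hε : ∀ i, 0 < ε i) (hε0 : Tendsto ε l (𝓝 0))
    (hab : ∀ i, a i ≤ max (b i + ε i) ((-(ε i)⁻¹ : ℝ) : EReal)) :
    limsup a l ≤ limsup b l := by
  have hεE : limsup (fun i ↦ (ε i : EReal)) l = 0 := by
    simpa using (EReal.tendsto_coe.mpr hε0).limsup_eq
  calc limsup a l ≤ limsup (fun i ↦ max (b i + ε i) ((-(ε i)⁻¹ : ℝ) : EReal)) l :=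
        limsup_le_limsup (.of_forall hab)
    _ = max (limsup (fun i ↦ b i + ε i) l)
          (limsup (fun i ↦ ((-(ε i)⁻¹ : ℝ) : EReal)) l) :=
        limsup_max
    _ = limsup (fun i ↦ b i + ε i) l := by
        rw [(tendsto_coe_neg_inv_nhds_bot hε hε0).limsup_eq, max_bot_right]
    _ ≤ limsup b l + limsup (fun i ↦ (ε i : EReal)) l :=
        EReal.limsup_add_le (.inr (by simp [hεE])) (.inr (by simp [hεE]))
    _ = limsup b l := by rw [hεE, add_zero]

end EpsMinimizer

theorem cluster_point_of_eps_minimizers_is_minimizer_general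
    {X : Type*} [MetricSpace X]
    (fj : ℕ → X → EReal) (finf : X → EReal)
    (hGamma : ∀ x : X,
      (∀ u : ℕ → X, Tendsto u atTop (𝓝 x) →
        finf x ≤ atTop.liminf (fun j => fj j (u j))) ∧
      (∃ u : ℕ → X, Tendsto u atTop (𝓝 x) ∧
        atTop.limsup (fun j => fj j (u j)) ≤ finf x))
    (hcoercive : ∃ K : Set X, K.Nonempty ∧ IsCompact K ∧
      ∀ j, (⨅ x : X, fj j x) = ⨅ x ∈ K, fj j x)
    (ε : ℕ → ℝ) (hε : ∀ j, 0 < ε j) (hε0 : Tendsto ε atTop (𝓝 0))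
    (x : ℕ → X)
    (hmin : ∀ j, fj j (x j) ≤
      max ((⨅ y : X, fj j y) + ((ε j : ℝ) : EReal)) (((-(ε j)⁻¹ : ℝ) : EReal)))
    (xinf : X) (φ : ℕ → ℕ) (hφ : StrictMono φ)
    (hconv : Tendsto (x ∘ φ) atTop (𝓝 xinf)) :
    (∀ y : X, finf xinf ≤ finf y) ∧
      Tendsto (fun j => fj j (x j)) atTop (𝓝 (finf xinf)) := by
  obtain ⟨K, -, hK, hKinf⟩ := hcoercive
  have hliminf := fun y ↦ (hGamma y).1
  have hlimsup : ∀ y, limsup (fun j ↦ fj j (x j)) atTop ≤ finf y := fun y ↦ by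
    obtain ⟨u, -, hu⟩ := (hGamma y).2
    calc limsup (fun j ↦ fj j (x j)) atTop ≤ limsup (fun j ↦ ⨅ z, fj j z) atTop :=
          limsup_le_of_le_max_add_neg_inv hε hε0 hmin
      _ ≤ limsup (fun j ↦ fj j (u j)) atTop :=
          limsup_le_limsup (.of_forall fun j ↦ iInf_le _ _)
      _ ≤ finf y := hu
  have hxinf : ∀ y, finf xinf ≤ finf y := fun y ↦
    (le_limsup_of_tendsto_comp (hliminf xinf) hφ hconv).trans (hlimsup y)
  refine ⟨hxinf, tendsto_of_le_liminf_of_limsup_le ?_ (hlimsup xinf)⟩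
  calc finf xinf = ⨅ y, finf y := le_antisymm (le_iInf hxinf) (iInf_le _ _)
    _ ≤ liminf (fun j ↦ ⨅ z, fj j z) atTop :=
      iInf_le_liminf_iInf_of_isSeqCompact hliminf hK.isSeqCompact hKinf
    _ ≤ liminf (fun j ↦ fj j (x j)) atTop := liminf_le_liminf (.of_forall fun j ↦ iInf_le _ _)

/-- In a metric space, if `(fj)` Γ-converges (sequentially) to
`finf`, is equi-mildly coercive, and `x j` is an `ε j`-minimizer of `fj j` with
`ε j → 0`, then any cluster point `xinf` of `(x j)` is a minimizer of `finf` and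
`finf xinf = lim_j fj j (x j)`. The functionals take values in `ℝ ∪ {+∞}`. -/
theorem cluster_point_of_eps_minimizers_is_minimizer
    {X : Type*} [MetricSpace X]
    (fj : ℕ → X → EReal) (finf : X → EReal)
    (hnotbot : ∀ j x, fj j x ≠ ⊥) (hnotbot' : ∀ x, finf x ≠ ⊥)
    (hGamma : ∀ x : X,
      (∀ u : ℕ → X, Tendsto u atTop (𝓝 x) →
        finf x ≤ atTop.liminf (fun j => fj j (u j))) ∧
      (∃ u : ℕ → X, Tendsto u atTop (𝓝 x) ∧
        atTop.limsup (fun j => fj j (u j)) ≤ finf x))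
    (hcoercive : ∃ K : Set X, K.Nonempty ∧ IsCompact K ∧
      ∀ j, (⨅ x : X, fj j x) = ⨅ x ∈ K, fj j x)
    (ε : ℕ → ℝ) (hε : ∀ j, 0 < ε j) (hε0 : Tendsto ε atTop (𝓝 0))
    (x : ℕ → X)
    (hmin : ∀ j, fj j (x j) ≤
      max ((⨅ y : X, fj j y) + ((ε j : ℝ) : EReal)) (((-(ε j)⁻¹ : ℝ) : EReal)))
    (xinf : X) (φ : ℕ → ℕ) (hφ : StrictMono φ)
    (hconv : Tendsto (x ∘ φ) atTop (𝓝 xinf)) :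
    (∀ y : X, finf xinf ≤ finf y) ∧
      Tendsto (fun j => fj j (x j)) atTop (𝓝 (finf xinf)) :=
  cluster_point_of_eps_minimizers_is_minimizer_general fj finf hGamma hcoercive ε hε hε0 x hmin xinf
    φ hφ hconv
end

section
/- Let X be a topological space, (f_j) an equi-coercive sequence of functionals from X to ℝ∪{+∞} that Γ-converges to f_∞ with f_∞ not identically +∞. If ε_j → 0, ε_j > 0, and x_j is an ε_j-minimizer of f_j for each j, then the sequence (x_j) has a cluster point. -/
open Filter Topology

/-! Taking `U = univ` in the definition of the Γ-upper limit gives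
`limsup_j inf f_j ≤ f_∞ x₀ < c` for a point with `f_∞ x₀ < +∞` and some real `c`, so eventually
`inf f_j < c`. An `ε_j`-minimizer with `ε_j < 1` then has `f_j (x_j) ≤ max (c + 1) (-1)`, so the
tail of `(x_j)` lies in the compact set `K_t` for `t = max (c + 1) (-1)`, where it must cluster. -/

theorem limsup_iInf_le_gammaLimsup {X : Type*} [TopologicalSpace X]
    (f : ℕ → X → EReal) (x : X) :
    atTop.limsup (fun j => ⨅ y, f j y) ≤ GammaLimsup f x := by
  refine le_iSup₂_of_le Set.univ isOpen_univ (le_iSup_of_le (Set.mem_univ x) ?_)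
  simp only [Set.mem_univ, iInf_true, le_refl]

theorem eventually_iInf_lt_of_gammaLimsup_lt {X : Type*} [TopologicalSpace X]
    {f : ℕ → X → EReal} {x : X} {c : EReal} (hc : GammaLimsup f x < c) :
    ∀ᶠ j in atTop, ⨅ y, f j y < c :=
  eventually_lt_of_limsup_lt ((limsup_iInf_le_gammaLimsup f x).trans_lt hc)

theorem EReal.max_add_coe_neg_inv_le {m : EReal} {c e : ℝ} (hm : m ≤ c) (he : 0 < e)
    (he1 : e ≤ 1) :
    max (m + e) ((-e⁻¹ : ℝ) : EReal) ≤ ((max (c + 1) (-1) : ℝ) : EReal) := by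
  refine max_le ?_ ?_
  · calc m + e ≤ (c : EReal) + (1 : ℝ) := add_le_add hm (by exact_mod_cast he1)
      _ = ((c + 1 : ℝ) : EReal) := by norm_cast
      _ ≤ _ := by exact_mod_cast le_max_left _ _
  · have : 1 ≤ e⁻¹ := one_le_inv_iff₀.mpr ⟨he, he1⟩
    exact_mod_cast (neg_le_neg this).trans (le_max_right _ _)

theorem eps_minimizers_have_cluster_point_general
    {X : Type*} [TopologicalSpace X]
    (fj : ℕ → X → EReal) (finf : X → EReal)
    (hequicoercive : ∀ t : ℝ, ∃ K : Set X, IsClosed K ∧ IsCompact K ∧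
      ∀ j, {x : X | fj j x ≤ (t : EReal)} ⊆ K)
    (hGamma : ∀ x, GammaLiminf fj x = finf x ∧ GammaLimsup fj x = finf x)
    (hne : ∃ x, finf x ≠ ⊤)
    (ε : ℕ → ℝ) (hε : ∀ j, 0 < ε j) (hε0 : Tendsto ε atTop (𝓝 0))
    (x : ℕ → X)
    (hmin : ∀ j, fj j (x j) ≤
      max ((⨅ y : X, fj j y) + ((ε j : ℝ) : EReal)) (((-(ε j)⁻¹ : ℝ) : EReal))) :
    ∃ xinf : X, MapClusterPt xinf atTop x := by
  obtain ⟨x₀, hx₀⟩ := hne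
  obtain ⟨c, hx₀c, -⟩ := EReal.exists_between_coe_real (lt_top_iff_ne_top.mpr hx₀)
  have hinf : ∀ᶠ j in atTop, ⨅ y, fj j y < c :=
    eventually_iInf_lt_of_gammaLimsup_lt ((hGamma x₀).2 ▸ hx₀c)
  obtain ⟨K, -, hK, hsub⟩ := hequicoercive (max (c + 1) (-1))
  have htail : ∀ᶠ j in atTop, x j ∈ K := by
    filter_upwards [hinf, hε0.eventually_le_const one_pos] with j hj hεj
    exact hsub j ((hmin j).trans (EReal.max_add_coe_neg_inv_le hj.le (hε j) hεj))
  obtain ⟨xinf, -, hcluster⟩ := hK.exists_mapClusterPt_of_frequently htail.frequently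
  exact ⟨xinf, hcluster⟩

/-- If `(fj)` is equi-coercive and Γ-converges to `finf`, with
`finf` not identically `+∞`, and `x j` is an `ε j`-minimizer of `fj j` with
`ε j → 0`, then `(x j)` has a cluster point. Functionals take values in
`ℝ ∪ {+∞}`. -/
theorem eps_minimizers_have_cluster_point
    {X : Type*} [TopologicalSpace X]
    (fj : ℕ → X → EReal) (finf : X → EReal)
    (hnotbot : ∀ j x, fj j x ≠ ⊥)
    (hequicoercive : ∀ t : ℝ, ∃ K : Set X, IsClosed K ∧ IsCompact K ∧
      ∀ j, {x : X | fj j x ≤ (t : EReal)} ⊆ K)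
    (hGamma : ∀ x, GammaLiminf fj x = finf x ∧ GammaLimsup fj x = finf x)
    (hne : ∃ x, finf x ≠ ⊤)
    (ε : ℕ → ℝ) (hε : ∀ j, 0 < ε j) (hε0 : Tendsto ε atTop (𝓝 0))
    (x : ℕ → X)
    (hmin : ∀ j, fj j (x j) ≤
      max ((⨅ y : X, fj j y) + ((ε j : ℝ) : EReal)) (((-(ε j)⁻¹ : ℝ) : EReal))) :
    ∃ xinf : X, MapClusterPt xinf atTop x :=
  eps_minimizers_have_cluster_point_general fj finf hequicoercive hGamma hne ε hε hε0 x hmin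
end
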